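/- arXiv:2508.02471 — 6 statements merged into one kernel-verified Lean document; each statement's English description precedes it below -/
import Mathlib

section
/- Let F, G, T be positive integers, let A ∈ ℂ^{T×F} be a matrix whose first row has all entries equal to 1, let r̂ ∈ ℂ^T, let C ∈ ℝ^{F×G} have nonnegative entries, and let β, ζ, η > 0. For ε ≥ 0 define J_ε(M) = (1/T)·‖r̂ − A(M·1_G)‖₂² + β·1_Fᵀ M 1_G + ζ·(⟨C, M⟩ + ε·D(M) + η·‖M‖_{∞,1}) for M ∈ ℝ^{F×G} with nonnegative entries. Let (ε_p)_p be a sequence of positive reals with ε_p → 0, and for each p let M_p be a minimizer of J_{ε_p} over the nonnegative matrices. Then the sequence (M_p)_p has a limit point M⋆, every such limit point minimizes J_0 over the nonnegative matrices, and M⋆ is the unique element of argmin J_0 with minimal value of D (the maximum-entropy minimizer); consequently ν⋆ = M⋆·1_G satisfies ν⋆ = M⋆ 1_G for this unique maximum-entropy solution M⋆. -/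
open scoped BigOperators

/-- Entropy term `D(M) = Σ_{f,g} (M_{f,g} log M_{f,g} − M_{f,g} + 1)`
(with the convention `0·log 0 = 0`, which holds since `Real.log 0 = 0`). -/
noncomputable def entD {F G : ℕ} (M : Matrix (Fin F) (Fin G) ℝ) : ℝ :=
  ∑ f, ∑ g, (M f g * Real.log (M f g) - M f g + 1)

/-- Mixed norm `‖M‖_{∞,1} = Σ_g max_f |M_{f,g}|`. -/
noncomputable def mixedInfOne {F G : ℕ} (M : Matrix (Fin F) (Fin G) ℝ) : ℝ :=
  ∑ g, ⨆ f, |M f g|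

/-- Frobenius inner product `⟨C, M⟩ = Σ_{f,g} C_{f,g} M_{f,g}`. -/
def frob {F G : ℕ} (C M : Matrix (Fin F) (Fin G) ℝ) : ℝ :=
  ∑ f, ∑ g, C f g * M f g

open Filter Topology Set InformationTheory

/-!
`J_ε = J₀ + ζ ε D`, and the `β`-term bounds every entry of a nonnegative `M` by
`J_ε(M) / β ≤ J_ε(0) / β`, so the minimizers `M_p` stay in a compact box and have a convergent
subsequence. Along a convergent subsequence, `J₀(M_p) ≤ J₀(M) + ζ ε_p D(M)` passes to the limit,
so the limit minimizes `J₀`; for a minimizer `M` of `J₀`, optimality of `M_p` gives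
`D(M_p) ≤ D(M)`, so the limit also minimizes `D` on `argmin J₀`. As `J₀` is convex, `argmin J₀`
is convex, and `D` is strictly convex on it, so this lexicographic minimizer is unique and all
limit points coincide.
-/

def IsLexMinOn {X : Type*} (J D : X → ℝ) (S : Set X) (x : X) : Prop :=
  x ∈ S ∧ IsMinOn J S x ∧ IsMinOn D {y ∈ S | IsMinOn J S y} x

section Convex

variable {E : Type*} [AddCommGroup E] [Module ℝ E] {S : Set E} {J D : E → ℝ}

theorem ConvexOn.convex_setOf_isMinOn (hJ : ConvexOn ℝ S J) :
    Convex ℝ {y ∈ S | IsMinOn J S y} := by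
  rintro y ⟨hyS, hy⟩ z ⟨hzS, hz⟩ a b ha hb hab
  refine ⟨hJ.1 hyS hzS ha hb hab, fun w hw => ?_⟩
  calc J (a • y + b • z) ≤ a • J y + b • J z := hJ.2 hyS hzS ha hb hab
    _ ≤ a • J w + b • J w := by gcongr; exacts [hy hw, hz hw]
    _ = J w := by rw [← add_smul, hab, one_smul]

theorem IsLexMinOn.eq {x y : E} (hJ : ConvexOn ℝ S J) (hD : StrictConvexOn ℝ S D)
    (hx : IsLexMinOn J D S x) (hy : IsLexMinOn J D S y) : x = y :=
  (hD.subset (sep_subset _ _) hJ.convex_setOf_isMinOn).eq_of_isMinOn hx.2.2 hy.2.2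
    ⟨hx.1, hx.2.1⟩ ⟨hy.1, hy.2.1⟩

theorem ConvexOn.finsetSum {ι : Type*} (t : Finset ι) {φ : ι → E → ℝ} (hS : Convex ℝ S)
    (hφ : ∀ i ∈ t, ConvexOn ℝ S (φ i)) : ConvexOn ℝ S fun x => ∑ i ∈ t, φ i x := by
  classical
  induction t using Finset.induction_on with
  | empty => simpa using convexOn_const 0 hS
  | insert i t hi ih =>
    simp_rw [Finset.sum_insert hi]
    exact (hφ i (t.mem_insert_self i)).add (ih fun j hj => hφ j (Finset.mem_insert_of_mem hj))

theorem convexOn_normSq_sub (c : ℂ) (ℓ : E →ₗ[ℝ] ℂ) :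
    ConvexOn ℝ univ fun x => Complex.normSq (c - ℓ x) := by
  have hsq : ConvexOn ℝ univ fun z : ℂ => ‖z‖ ^ 2 :=
    (convexOn_norm convex_univ).pow (fun _ _ => norm_nonneg _) 2
  refine (hsq.comp_affineMap (AffineMap.const ℝ E c - ℓ.toAffineMap)).congr fun x _ => ?_
  simp [Complex.normSq_eq_norm_sq]

end Convex

section Limit

variable {X : Type*} [TopologicalSpace X] {S : Set X} {J D : X → ℝ} {ε : ℕ → ℝ} {u : ℕ → X}
  {x : X}

theorem isMinOn_of_tendsto_of_isMinOn_add_mul (hJ : Continuous J) (hD0 : ∀ y ∈ S, 0 ≤ D y)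
    (hε : ∀ p, 0 ≤ ε p) (hε0 : Tendsto ε atTop (𝓝 0)) (huS : ∀ p, u p ∈ S)
    (hu : ∀ p, IsMinOn (fun y => J y + ε p * D y) S (u p)) (hux : Tendsto u atTop (𝓝 x)) :
    IsMinOn J S x := by
  intro y hy
  have hle : ∀ p, J (u p) ≤ J y + ε p * D y := fun p =>
    (le_add_of_nonneg_right (mul_nonneg (hε p) (hD0 _ (huS p)))).trans (hu p hy)
  refine le_of_tendsto_of_tendsto' ((hJ.tendsto x).comp hux) ?_ hle
  simpa using tendsto_const_nhds.add (hε0.mul_const (D y))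

theorem isMinOn_minimizers_of_tendsto_of_isMinOn_add_mul (hD : Continuous D)
    (hε : ∀ p, 0 < ε p) (huS : ∀ p, u p ∈ S)
    (hu : ∀ p, IsMinOn (fun y => J y + ε p * D y) S (u p)) (hux : Tendsto u atTop (𝓝 x)) :
    IsMinOn D {y ∈ S | IsMinOn J S y} x := by
  rintro y ⟨hyS, hy⟩
  have hle : ∀ p, D (u p) ≤ D y := fun p => by
    have h1 : J (u p) + ε p * D (u p) ≤ J y + ε p * D y := hu p hyS
    have h2 : J y ≤ J (u p) := hy (huS p)
    exact le_of_mul_le_mul_left (by linarith) (hε p)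
  exact le_of_tendsto' ((hD.tendsto x).comp hux) hle

theorem IsLexMinOn.of_tendsto (hS : IsClosed S) (hJ : Continuous J) (hD : Continuous D)
    (hD0 : ∀ y ∈ S, 0 ≤ D y) (hε : ∀ p, 0 < ε p) (hε0 : Tendsto ε atTop (𝓝 0))
    (huS : ∀ p, u p ∈ S) (hu : ∀ p, IsMinOn (fun y => J y + ε p * D y) S (u p))
    (hux : Tendsto u atTop (𝓝 x)) : IsLexMinOn J D S x :=
  ⟨hS.mem_of_tendsto hux (Eventually.of_forall huS),
    isMinOn_of_tendsto_of_isMinOn_add_mul hJ hD0 (fun p => (hε p).le) hε0 huS hu hux,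
    isMinOn_minimizers_of_tendsto_of_isMinOn_add_mul hD hε huS hu hux⟩

end Limit

instance Matrix.firstCountableTopology {m n R : Type*} [Countable m] [Countable n]
    [TopologicalSpace R] [FirstCountableTopology R] : FirstCountableTopology (Matrix m n R) :=
  inferInstanceAs (FirstCountableTopology (m → n → R))

section Matrix

variable {F G : ℕ}

abbrev nonnegMatrices (F G : ℕ) : Set (Matrix (Fin F) (Fin G) ℝ) := {M | ∀ f g, 0 ≤ M f g}

theorem convex_nonnegMatrices : Convex ℝ (nonnegMatrices F G) := by
  intro M hM M' hM' a b ha hb _ f g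
  simp only [Matrix.add_apply, Matrix.smul_apply, smul_eq_mul]
  have := hM f g; have := hM' f g
  positivity

theorem isClosed_nonnegMatrices : IsClosed (nonnegMatrices F G) := by
  simp only [nonnegMatrices, ofPred_forall]
  exact isClosed_iInter fun f => isClosed_iInter fun g => isClosed_le continuous_const (by fun_prop)

theorem entD_eq_sum_klFun (M : Matrix (Fin F) (Fin G) ℝ) : entD M = ∑ f, ∑ g, klFun (M f g) := by
  simp only [entD, klFun]; ring_nf

theorem entD_nonneg {M : Matrix (Fin F) (Fin G) ℝ} (hM : M ∈ nonnegMatrices F G) : 0 ≤ entD M := by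
  rw [entD_eq_sum_klFun]
  exact Finset.sum_nonneg fun f _ => Finset.sum_nonneg fun g _ => klFun_nonneg (hM f g)

@[fun_prop]
theorem continuous_entD : Continuous (entD : Matrix (Fin F) (Fin G) ℝ → ℝ) := by
  simp_rw +singlePass [funext entD_eq_sum_klFun]
  exact continuous_finsetSum _ fun f _ => continuous_finsetSum _ fun g _ =>
    continuous_klFun.comp (by fun_prop)

theorem strictConvexOn_entD : StrictConvexOn ℝ (nonnegMatrices F G) entD := by
  refine ⟨convex_nonnegMatrices, fun M hM M' hM' hne a b ha hb hab => ?_⟩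
  obtain ⟨f₀, g₀, hfg⟩ : ∃ f g, M f g ≠ M' f g := by
    by_contra! h; exact hne (Matrix.ext h)
  have hle : ∀ f g, klFun (a * M f g + b * M' f g) ≤ a * klFun (M f g) + b * klFun (M' f g) :=
    fun f g => convexOn_klFun.2 (hM f g) (hM' f g) ha.le hb.le hab
  have hlt : klFun (a * M f₀ g₀ + b * M' f₀ g₀) < a * klFun (M f₀ g₀) + b * klFun (M' f₀ g₀) :=
    strictConvexOn_klFun.2 (hM f₀ g₀) (hM' f₀ g₀) hfg ha hb hab
  simp only [entD_eq_sum_klFun, Matrix.add_apply, Matrix.smul_apply, smul_eq_mul, Finset.mul_sum,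
    ← Finset.sum_add_distrib]
  exact Finset.sum_lt_sum (fun f _ => Finset.sum_le_sum fun g _ => hle f g)
    ⟨f₀, Finset.mem_univ _, Finset.sum_lt_sum (fun g _ => hle f₀ g) ⟨g₀, Finset.mem_univ _, hlt⟩⟩

theorem mixedInfOne_nonneg (M : Matrix (Fin F) (Fin G) ℝ) : 0 ≤ mixedInfOne M :=
  Finset.sum_nonneg fun _ _ => Real.iSup_nonneg fun _ => abs_nonneg _

@[fun_prop]
theorem continuous_mixedInfOne : Continuous (mixedInfOne : Matrix (Fin F) (Fin G) ℝ → ℝ) := by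
  refine continuous_finsetSum _ fun g _ => ?_
  rcases isEmpty_or_nonempty (Fin F) with hF | hF
  · simpa using continuous_const
  · simp_rw [← Finset.sup'_univ_eq_ciSup]
    exact Continuous.finset_sup'_apply _ fun f _ => by fun_prop

theorem convexOn_iSup_abs_apply (g : Fin G) :
    ConvexOn ℝ univ fun M : Matrix (Fin F) (Fin G) ℝ => ⨆ f, |M f g| := by
  refine ⟨convex_univ, fun M _ M' _ a b ha hb _ => ?_⟩
  have hsup : ∀ (N : Matrix (Fin F) (Fin G) ℝ) f, |N f g| ≤ ⨆ f, |N f g| :=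
    fun N => le_ciSup (finite_range _).bddAbove
  have hnonneg : ∀ N : Matrix (Fin F) (Fin G) ℝ, 0 ≤ ⨆ f, |N f g| :=
    fun N => Real.iSup_nonneg fun f => abs_nonneg _
  simp only [Matrix.add_apply, Matrix.smul_apply, smul_eq_mul]
  refine Real.iSup_le (fun f => ?_) (by have := hnonneg M; have := hnonneg M'; positivity)
  calc |a * M f g + b * M' f g| ≤ a * |M f g| + b * |M' f g| := by
        simpa [abs_mul, abs_of_nonneg ha, abs_of_nonneg hb] using
          abs_add_le (a * M f g) (b * M' f g)
    _ ≤ a * (⨆ f, |M f g|) + b * ⨆ f, |M' f g| := by gcongr <;> exact hsup _ f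

theorem convexOn_mixedInfOne : ConvexOn ℝ univ (mixedInfOne : Matrix (Fin F) (Fin G) ℝ → ℝ) :=
  ConvexOn.finsetSum _ convex_univ fun g _ => convexOn_iSup_abs_apply g

theorem isCompact_setOf_forall_mem_Icc (R : ℝ) :
    IsCompact {M : Matrix (Fin F) (Fin G) ℝ | ∀ f g, M f g ∈ Icc 0 R} := by
  have h : {M : Matrix (Fin F) (Fin G) ℝ | ∀ f g, M f g ∈ Icc 0 R} =
      univ.pi fun _ => univ.pi fun _ => Icc 0 R := by
    ext M; exact ⟨fun h f _ g _ => h f g, fun h f g => h f (mem_univ f) g (mem_univ g)⟩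
  rw [h]
  exact isCompact_univ_pi fun _ => isCompact_univ_pi fun _ => isCompact_Icc

section Objective

variable {T : ℕ} (A : Matrix (Fin T) (Fin F) ℂ) (r : Fin T → ℂ) (C : Matrix (Fin F) (Fin G) ℝ)
  (β ζ η : ℝ)

noncomputable def objective (ε : ℝ) (M : Matrix (Fin F) (Fin G) ℝ) : ℝ :=
  (1 / (T : ℝ)) * ∑ t, Complex.normSq (r t - ∑ f, A t f * ((∑ g, M f g : ℝ) : ℂ))
  + β * (∑ f, ∑ g, M f g)
  + ζ * (frob C M + ε * entD M + η * mixedInfOne M)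

def applyRowSums (t : Fin T) : Matrix (Fin F) (Fin G) ℝ →ₗ[ℝ] ℂ where
  toFun M := ∑ f, A t f * ((∑ g, M f g : ℝ) : ℂ)
  map_add' M M' := by simp [Finset.sum_add_distrib, mul_add]
  map_smul' c M := by simp [Finset.mul_sum, Complex.real_smul, mul_left_comm]

theorem objective_eq_add (ε : ℝ) :
    objective A r C β ζ η ε = fun M => objective A r C β ζ η 0 M + ζ * ε * entD M := by
  funext M; simp only [objective]; ring

theorem continuous_objective (ε : ℝ) : Continuous (objective A r C β ζ η ε) := by
  unfold objective frob
  fun_prop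

variable {A r C β ζ η}

theorem convexOn_objective (hζ : 0 ≤ ζ) (hη : 0 ≤ η) {ε : ℝ} (hε : 0 ≤ ε) :
    ConvexOn ℝ (nonnegMatrices F G) (objective A r C β ζ η ε) := by
  have hS := (convex_nonnegMatrices : Convex ℝ (nonnegMatrices F G))
  have hres : ConvexOn ℝ (nonnegMatrices F G) fun M =>
      ∑ t, Complex.normSq (r t - applyRowSums A t M) :=
    ConvexOn.finsetSum _ hS fun t _ =>
      (convexOn_normSq_sub (r t) (applyRowSums A t)).subset (subset_univ _) hS
  have hlin := LinearMap.convexOn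
    (∑ f, ∑ g, (β + ζ * C f g) • Matrix.entryLinearMap ℝ ℝ f g) hS
  have hreg := (strictConvexOn_entD.convexOn.smul hε).add
    ((convexOn_mixedInfOne.subset (subset_univ _) hS).smul hη)
  refine (((hres.smul (by positivity : (0:ℝ) ≤ 1 / T)).add hlin).add (hreg.smul hζ)).congr
    fun M _ => ?_
  simp only [objective, frob, applyRowSums, one_div, Complex.ofReal_sum, Finset.mul_sum,
    LinearMap.coe_mk, AddHom.coe_mk, smul_eq_mul, LinearMap.coe_sum, LinearMap.coe_smul,
    Pi.add_apply, Finset.sum_apply, Pi.smul_apply, Matrix.entryLinearMap_apply, mul_add, add_mul,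
    mul_assoc, Finset.sum_add_distrib]
  ring

theorem mul_apply_le_objective (hC : ∀ f g, 0 ≤ C f g) (hβ : 0 ≤ β) (hζ : 0 ≤ ζ) (hη : 0 ≤ η)
    {ε : ℝ} (hε : 0 ≤ ε) {M : Matrix (Fin F) (Fin G) ℝ} (hM : M ∈ nonnegMatrices F G)
    (f : Fin F) (g : Fin G) : β * M f g ≤ objective A r C β ζ η ε M := by
  have hres : 0 ≤ (1 / (T : ℝ)) * ∑ t, Complex.normSq (r t - ∑ f, A t f * ((∑ g, M f g : ℝ) : ℂ)) :=
    mul_nonneg (by positivity) (Finset.sum_nonneg fun t _ => Complex.normSq_nonneg _)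
  have hfrob : 0 ≤ frob C M :=
    Finset.sum_nonneg fun f _ => Finset.sum_nonneg fun g _ => mul_nonneg (hC f g) (hM f g)
  have hreg : 0 ≤ frob C M + ε * entD M + η * mixedInfOne M := by
    have := entD_nonneg hM; have := mixedInfOne_nonneg M; positivity
  have hentry : M f g ≤ ∑ f, ∑ g, M f g :=
    (Finset.single_le_sum (fun g _ => hM f g) (Finset.mem_univ g)).trans
      (Finset.single_le_sum (f := fun f => ∑ g, M f g)
        (fun f _ => Finset.sum_nonneg fun g _ => hM f g) (Finset.mem_univ f))
  unfold objective
  nlinarith [mul_le_mul_of_nonneg_left hentry hβ, mul_nonneg hζ hreg]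

theorem objective_mono (hζ : 0 ≤ ζ) {ε ε' : ℝ} (hεε' : ε ≤ ε') {M : Matrix (Fin F) (Fin G) ℝ}
    (hM : M ∈ nonnegMatrices F G) : objective A r C β ζ η ε M ≤ objective A r C β ζ η ε' M := by
  rw [objective_eq_add, objective_eq_add A r C β ζ η ε']
  have := entD_nonneg hM
  dsimp only
  gcongr

theorem exists_tendsto_subseq_of_isMinOn_objective (hC : ∀ f g, 0 ≤ C f g) (hβ : 0 < β)
    (hζ : 0 ≤ ζ) (hη : 0 ≤ η) {ε : ℕ → ℝ} (hε : ∀ p, 0 ≤ ε p) (hεb : BddAbove (range ε))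
    {u : ℕ → Matrix (Fin F) (Fin G) ℝ} (huS : ∀ p, u p ∈ nonnegMatrices F G)
    (hu : ∀ p, IsMinOn (objective A r C β ζ η (ε p)) (nonnegMatrices F G) (u p)) :
    ∃ N, ∃ φ : ℕ → ℕ, StrictMono φ ∧ Tendsto (u ∘ φ) atTop (𝓝 N) := by
  obtain ⟨E, hE⟩ := hεb
  have hbox : ∀ p f g, u p f g ∈ Icc 0 (objective A r C β ζ η E 0 / β) := fun p f g => by
    refine ⟨huS p f g, (le_div_iff₀' hβ).2 ?_⟩
    calc β * u p f g ≤ objective A r C β ζ η (ε p) (u p) :=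
          mul_apply_le_objective hC hβ.le hζ hη (hε p) (huS p) f g
      _ ≤ objective A r C β ζ η (ε p) 0 := hu p fun _ _ => le_rfl
      _ ≤ objective A r C β ζ η E 0 := objective_mono hζ (hE (mem_range_self p)) fun _ _ => le_rfl
  obtain ⟨N, -, φ, hφ, hN⟩ := (isCompact_setOf_forall_mem_Icc _).tendsto_subseq hbox
  exact ⟨N, φ, hφ, hN⟩

end Objective

end Matrix

theorem stmt0_general (F G T : ℕ)
    (A : Matrix (Fin T) (Fin F) ℂ)
    (r : Fin T → ℂ)
    (C : Matrix (Fin F) (Fin G) ℝ) (hC : ∀ f g, 0 ≤ C f g)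
    (β ζ η : ℝ) (hβ : 0 < β) (hζ : 0 < ζ) (hη : 0 < η)
    (J : ℝ → Matrix (Fin F) (Fin G) ℝ → ℝ)
    (hJ : ∀ ε M, J ε M =
      (1 / (T : ℝ)) * ∑ t, Complex.normSq (r t - ∑ f, A t f * ((∑ g, M f g : ℝ) : ℂ))
      + β * (∑ f, ∑ g, M f g)
      + ζ * (frob C M + ε * entD M + η * mixedInfOne M))
    (εs : ℕ → ℝ) (hεpos : ∀ p, 0 < εs p)
    (hεlim : Filter.Tendsto εs Filter.atTop (nhds 0))
    (Ms : ℕ → Matrix (Fin F) (Fin G) ℝ)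
    (hMnn : ∀ p, ∀ f g, 0 ≤ Ms p f g)
    (hMmin : ∀ p, ∀ M : Matrix (Fin F) (Fin G) ℝ,
      (∀ f g, 0 ≤ M f g) → J (εs p) (Ms p) ≤ J (εs p) M) :
    ∃ Mstar : Matrix (Fin F) (Fin G) ℝ,
      -- the sequence has a limit point M⋆
      (∃ φ : ℕ → ℕ, StrictMono φ ∧
        Filter.Tendsto (fun p => Ms (φ p)) Filter.atTop (nhds Mstar)) ∧
      -- every limit point minimizes J₀ over the nonnegative matrices, minimizes D
      -- among all such minimizers, and (by uniqueness of the maximum-entropy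
      -- minimizer) equals M⋆
      (∀ N : Matrix (Fin F) (Fin G) ℝ,
        (∃ φ : ℕ → ℕ, StrictMono φ ∧
          Filter.Tendsto (fun p => Ms (φ p)) Filter.atTop (nhds N)) →
        (∀ f g, 0 ≤ N f g) ∧
        (∀ M : Matrix (Fin F) (Fin G) ℝ, (∀ f g, 0 ≤ M f g) → J 0 N ≤ J 0 M) ∧
        (∀ M : Matrix (Fin F) (Fin G) ℝ, (∀ f g, 0 ≤ M f g) →
          (∀ M' : Matrix (Fin F) (Fin G) ℝ, (∀ f g, 0 ≤ M' f g) → J 0 M ≤ J 0 M') →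
          entD N ≤ entD M) ∧
        N = Mstar) ∧
      -- M⋆ is the unique minimizer of J₀ with minimal entropy term D
      (∀ f g, 0 ≤ Mstar f g) ∧
      (∀ M : Matrix (Fin F) (Fin G) ℝ, (∀ f g, 0 ≤ M f g) → J 0 Mstar ≤ J 0 M) ∧
      (∀ M : Matrix (Fin F) (Fin G) ℝ, (∀ f g, 0 ≤ M f g) →
        (∀ M' : Matrix (Fin F) (Fin G) ℝ, (∀ f g, 0 ≤ M' f g) → J 0 M ≤ J 0 M') →
        entD Mstar ≤ entD M) ∧
      (∀ M : Matrix (Fin F) (Fin G) ℝ, (∀ f g, 0 ≤ M f g) →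
        (∀ M' : Matrix (Fin F) (Fin G) ℝ, (∀ f g, 0 ≤ M' f g) → J 0 M ≤ J 0 M') →
        (∀ M' : Matrix (Fin F) (Fin G) ℝ, (∀ f g, 0 ≤ M' f g) →
          (∀ M'' : Matrix (Fin F) (Fin G) ℝ, (∀ f g, 0 ≤ M'' f g) → J 0 M' ≤ J 0 M'') →
          entD M ≤ entD M') →
        M = Mstar) := by
  obtain rfl : J = objective A r C β ζ η := funext fun ε => funext (hJ ε)
  have hlex : ∀ N, (∃ φ : ℕ → ℕ, StrictMono φ ∧ Tendsto (fun p => Ms (φ p)) atTop (𝓝 N)) →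
      IsLexMinOn (objective A r C β ζ η 0) entD (nonnegMatrices F G) N := by
    rintro N ⟨φ, hφ, hN⟩
    refine IsLexMinOn.of_tendsto (ε := fun p => ζ * εs (φ p)) isClosed_nonnegMatrices
      (continuous_objective A r C β ζ η 0) continuous_entD (fun _ => entD_nonneg)
      (fun p => mul_pos hζ (hεpos _)) ?_ (fun _ => hMnn _) (fun p => ?_) hN
    · simpa using (hεlim.comp hφ.tendsto_atTop).const_mul ζ
    · rw [← objective_eq_add]
      exact hMmin (φ p)
  have huniq : ∀ M M', IsLexMinOn (objective A r C β ζ η 0) entD (nonnegMatrices F G) M →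
      IsLexMinOn (objective A r C β ζ η 0) entD (nonnegMatrices F G) M' → M = M' :=
    fun _ _ => IsLexMinOn.eq (convexOn_objective hζ.le hη.le le_rfl) strictConvexOn_entD
  obtain ⟨Mstar, φ, hφ, hlim⟩ := exists_tendsto_subseq_of_isMinOn_objective hC hβ hζ.le hη.le
    (fun p => (hεpos p).le) hεlim.bddAbove_range hMnn hMmin
  have hstar := hlex Mstar ⟨φ, hφ, hlim⟩
  refine ⟨Mstar, ⟨φ, hφ, hlim⟩, fun N hN => ?_, hstar.1, hstar.2.1,
    fun M hM hMJ => hstar.2.2 ⟨hM, hMJ⟩,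
    fun M hM hMJ hMD => huniq _ _ ⟨hM, hMJ, fun M' hM' => hMD M' hM'.1 hM'.2⟩ hstar⟩
  obtain ⟨hNS, hNJ, hND⟩ := hlex N hN
  exact ⟨hNS, hNJ, fun M hM hMJ => hND ⟨hM, hMJ⟩, huniq _ _ ⟨hNS, hNJ, hND⟩ hstar⟩

/-- maximum-entropy limit of the entropically regularized
multi-pitch objective as ε → 0. -/
theorem stmt0 (F G T : ℕ) (hF : 0 < F) (hG : 0 < G) (hT : 0 < T)
    (A : Matrix (Fin T) (Fin F) ℂ)
    (hA : ∀ f, A ⟨0, hT⟩ f = 1)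
    (r : Fin T → ℂ)
    (C : Matrix (Fin F) (Fin G) ℝ) (hC : ∀ f g, 0 ≤ C f g)
    (β ζ η : ℝ) (hβ : 0 < β) (hζ : 0 < ζ) (hη : 0 < η)
    (J : ℝ → Matrix (Fin F) (Fin G) ℝ → ℝ)
    (hJ : ∀ ε M, J ε M =
      (1 / (T : ℝ)) * ∑ t, Complex.normSq (r t - ∑ f, A t f * ((∑ g, M f g : ℝ) : ℂ))
      + β * (∑ f, ∑ g, M f g)
      + ζ * (frob C M + ε * entD M + η * mixedInfOne M))
    (εs : ℕ → ℝ) (hεpos : ∀ p, 0 < εs p)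
    (hεlim : Filter.Tendsto εs Filter.atTop (nhds 0))
    (Ms : ℕ → Matrix (Fin F) (Fin G) ℝ)
    (hMnn : ∀ p, ∀ f g, 0 ≤ Ms p f g)
    (hMmin : ∀ p, ∀ M : Matrix (Fin F) (Fin G) ℝ,
      (∀ f g, 0 ≤ M f g) → J (εs p) (Ms p) ≤ J (εs p) M) :
    ∃ Mstar : Matrix (Fin F) (Fin G) ℝ,
      -- the sequence has a limit point M⋆
      (∃ φ : ℕ → ℕ, StrictMono φ ∧
        Filter.Tendsto (fun p => Ms (φ p)) Filter.atTop (nhds Mstar)) ∧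
      -- every limit point minimizes J₀ over the nonnegative matrices, minimizes D
      -- among all such minimizers, and (by uniqueness of the maximum-entropy
      -- minimizer) equals M⋆
      (∀ N : Matrix (Fin F) (Fin G) ℝ,
        (∃ φ : ℕ → ℕ, StrictMono φ ∧
          Filter.Tendsto (fun p => Ms (φ p)) Filter.atTop (nhds N)) →
        (∀ f g, 0 ≤ N f g) ∧
        (∀ M : Matrix (Fin F) (Fin G) ℝ, (∀ f g, 0 ≤ M f g) → J 0 N ≤ J 0 M) ∧
        (∀ M : Matrix (Fin F) (Fin G) ℝ, (∀ f g, 0 ≤ M f g) →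
          (∀ M' : Matrix (Fin F) (Fin G) ℝ, (∀ f g, 0 ≤ M' f g) → J 0 M ≤ J 0 M') →
          entD N ≤ entD M) ∧
        N = Mstar) ∧
      -- M⋆ is the unique minimizer of J₀ with minimal entropy term D
      (∀ f g, 0 ≤ Mstar f g) ∧
      (∀ M : Matrix (Fin F) (Fin G) ℝ, (∀ f g, 0 ≤ M f g) → J 0 Mstar ≤ J 0 M) ∧
      (∀ M : Matrix (Fin F) (Fin G) ℝ, (∀ f g, 0 ≤ M f g) →
        (∀ M' : Matrix (Fin F) (Fin G) ℝ, (∀ f g, 0 ≤ M' f g) → J 0 M ≤ J 0 M') →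
        entD Mstar ≤ entD M) ∧
      (∀ M : Matrix (Fin F) (Fin G) ℝ, (∀ f g, 0 ≤ M f g) →
        (∀ M' : Matrix (Fin F) (Fin G) ℝ, (∀ f g, 0 ≤ M' f g) → J 0 M ≤ J 0 M') →
        (∀ M' : Matrix (Fin F) (Fin G) ℝ, (∀ f g, 0 ≤ M' f g) →
          (∀ M'' : Matrix (Fin F) (Fin G) ℝ, (∀ f g, 0 ≤ M'' f g) → J 0 M' ≤ J 0 M'') →
          entD M ≤ entD M') →
        M = Mstar) :=
  stmt0_general F G T A r C hC β ζ η hβ hζ hη J hJ εs hεpos hεlim Ms hMnn hMmin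
end

section
/- Let F, G, T be positive integers, let A ∈ ℂ^{T×F} be a matrix whose first row has all entries equal to 1, let r̂ ∈ ℂ^T, and let ρ > 0. Then the set U_ρ = { M ∈ ℝ^{F×G} : M has nonnegative entries and ‖r̂ − A(M·1_G)‖₂² ≤ ρ } is a compact subset of ℝ^{F×G}. -/
/-! Because the first row of `A` is all ones, the first residual entry is `r̂₀ - ∑ M`, so the
constraint bounds the total mass of the nonnegative matrix `M` by `Re r̂₀ + √ρ`. Hence `U_ρ` is a
closed subset of the compact set of nonnegative matrices of bounded total mass. -/

theorem Matrix.isClosed_setOf_nonneg_and_le {m n : Type*} {Φ : Matrix m n ℝ → ℝ}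
    (hΦ : Continuous Φ) (c : ℝ) :
    IsClosed {M : Matrix m n ℝ | (∀ i j, 0 ≤ M i j) ∧ Φ M ≤ c} := by
  simp only [Set.ofPred_and, Set.ofPred_forall]
  exact (isClosed_iInter fun i => isClosed_iInter fun j =>
    isClosed_le continuous_const (continuous_id.matrix_elem i j)).inter
    (isClosed_le hΦ continuous_const)

theorem Matrix.isCompact_setOf_nonneg_and_sum_le {m n : Type*} [Fintype m] [Fintype n] (R : ℝ) :
    IsCompact {M : Matrix m n ℝ | (∀ i j, 0 ≤ M i j) ∧ ∑ i, ∑ j, M i j ≤ R} := by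
  refine (isCompact_Icc (a := (0 : m → n → ℝ)) (b := fun _ _ => R)).of_isClosed_subset
    (Matrix.isClosed_setOf_nonneg_and_le (by fun_prop) R) ?_
  rintro M ⟨hM, hR⟩
  refine ⟨hM, fun i j => ?_⟩
  calc M i j ≤ ∑ j', M i j' := Finset.single_le_sum (fun j' _ => hM i j') (Finset.mem_univ j)
    _ ≤ ∑ i', ∑ j', M i' j' :=
        Finset.single_le_sum (fun i' _ => Finset.sum_nonneg fun j' _ => hM i' j')
          (Finset.mem_univ i)
    _ ≤ R := hR

theorem Complex.le_re_add_sqrt_of_normSq_sub_ofReal_le {z : ℂ} {s ρ : ℝ}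
    (h : Complex.normSq (z - s) ≤ ρ) : s ≤ z.re + √ρ := by
  have hre : (z.re - s) ^ 2 ≤ ρ := by
    rw [Complex.normSq_apply] at h
    simp only [Complex.sub_re, Complex.ofReal_re, Complex.sub_im, Complex.ofReal_im, sub_zero] at h
    nlinarith [mul_self_nonneg z.im]
  linarith [neg_abs_le (z.re - s), Real.abs_le_sqrt hre]

theorem stmt1_general (F G T : ℕ) (hT : 0 < T)
    (A : Matrix (Fin T) (Fin F) ℂ)
    (hA : ∀ f, A ⟨0, hT⟩ f = 1)
    (r : Fin T → ℂ) (ρ : ℝ) :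
    IsCompact {M : Matrix (Fin F) (Fin G) ℝ |
      (∀ f g, 0 ≤ M f g) ∧
      ∑ t, Complex.normSq (r t - ∑ f, A t f * ((∑ g, M f g : ℝ) : ℂ)) ≤ ρ} := by
  set residual : Matrix (Fin F) (Fin G) ℝ → Fin T → ℝ :=
    fun M t => Complex.normSq (r t - ∑ f, A t f * ((∑ g, M f g : ℝ) : ℂ))
  refine (Matrix.isCompact_setOf_nonneg_and_sum_le ((r ⟨0, hT⟩).re + √ρ)).of_isClosed_subset
    (Matrix.isClosed_setOf_nonneg_and_le (Φ := fun M => ∑ t, residual M t) (by fun_prop) ρ) ?_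
  rintro M ⟨hM, hρ⟩
  refine ⟨hM, Complex.le_re_add_sqrt_of_normSq_sub_ofReal_le ?_⟩
  have hmass : ∑ f, A ⟨0, hT⟩ f * ((∑ g, M f g : ℝ) : ℂ) = ((∑ f, ∑ g, M f g : ℝ) : ℂ) := by
    simp [hA]
  rw [← hmass]
  exact (Finset.single_le_sum (f := residual M) (fun t _ => Complex.normSq_nonneg _)
    (Finset.mem_univ _)).trans hρ

/-- compactness of the feasibility set `U_ρ` of nonnegative matrices
whose row-sum vector maps under `A` (whose first row is all ones) to within
squared Euclidean distance `ρ` of `r̂`. -/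
theorem stmt1 (F G T : ℕ) (hF : 0 < F) (hG : 0 < G) (hT : 0 < T)
    (A : Matrix (Fin T) (Fin F) ℂ)
    (hA : ∀ f, A ⟨0, hT⟩ f = 1)
    (r : Fin T → ℂ) (ρ : ℝ) (hρ : 0 < ρ) :
    IsCompact {M : Matrix (Fin F) (Fin G) ℝ |
      (∀ f g, 0 ≤ M f g) ∧
      ∑ t, Complex.normSq (r t - ∑ f, A t f * ((∑ g, M f g : ℝ) : ℂ)) ≤ ρ} :=
  stmt1_general F G T hT A hA r ρ
end

section
/- Let U ⊆ ℝ^n be a nonempty compact convex set, let f : U → ℝ be continuous and convex, and let D : U → ℝ be continuous and strictly convex. Let (ε_p)_p be a sequence of positive reals with ε_p → 0, and for each p let M_p be a minimizer of f + ε_p·D over U. Then: (i) the set argmin_U f has a unique element M⋆ minimizing D over argmin_U f; (ii) every limit point of (M_p)_p equals M⋆; hence (iii) M_p → M⋆. -/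
/-!
Comparing `M_p` with any `y ∈ U` gives `f M_p ≤ f y + ε_p (D y - D M_p)`, so every limit point
of `(M_p)` minimizes `f`; comparing it with `y ∈ argmin_U f` gives `D M_p ≤ D y`, so every limit
point also minimizes `D` over `argmin_U f`. That set is compact and convex, hence strict convexity
of `D` leaves exactly one candidate `M⋆`, and compactness of `U` turns a unique limit point into
convergence.
-/

open Filter Topology Set

section Minimizers

variable {E β : Type*}

def minimizers [Preorder β] (f : E → β) (U : Set E) : Set E := {x ∈ U | IsMinOn f U x}

theorem minimizers_subset [Preorder β] (f : E → β) (U : Set E) : minimizers f U ⊆ U :=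
  sep_subset _ _

theorem minimizers_eq_sep [Preorder β] {f : E → β} {U : Set E} {m : E}
    (hm : m ∈ minimizers f U) : minimizers f U = {x ∈ U | f x ≤ f m} := by
  ext x
  exact ⟨fun hx ↦ ⟨hx.1, hx.2 hm.1⟩, fun hx ↦ ⟨hx.1, fun y hy ↦ hx.2.trans (hm.2 hy)⟩⟩

theorem isCompact_minimizers [TopologicalSpace E] [T2Space E] [TopologicalSpace β] [Preorder β]
    [ClosedIicTopology β] {f : E → β} {U : Set E} (hU : IsCompact U) (hf : ContinuousOn f U) :
    IsCompact (minimizers f U) := by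
  rcases (minimizers f U).eq_empty_or_nonempty with h | ⟨m, hm⟩
  · simp [h]
  rw [minimizers_eq_sep hm]
  exact hU.of_isClosed_subset (hf.preimage_isClosed_of_isClosed hU.isClosed isClosed_Iic)
    (sep_subset _ _)

theorem ConvexOn.convex_minimizers {𝕜 : Type*} [Semiring 𝕜] [PartialOrder 𝕜] [AddCommMonoid E]
    [AddCommMonoid β] [PartialOrder β] [IsOrderedAddMonoid β] [SMul 𝕜 E] [Module 𝕜 β]
    [PosSMulMono 𝕜 β] {f : E → β} {U : Set E} (hf : ConvexOn 𝕜 U f) :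
    Convex 𝕜 (minimizers f U) := by
  rcases (minimizers f U).eq_empty_or_nonempty with h | ⟨m, hm⟩
  · exact h ▸ convex_empty
  rw [minimizers_eq_sep hm]
  exact hf.convex_le (f m)

end Minimizers

section Regularization

variable {E ι : Type*} [TopologicalSpace E] {U : Set E} {f D : E → ℝ} {l : Filter ι} [l.NeBot]
  {ε : ι → ℝ} {M : ι → E} {N : E}

theorem mem_minimizers_of_tendsto_regularized (hU : IsClosed U) (hf : ContinuousOn f U)
    (hD : ContinuousOn D U) (hM : ∀ i, M i ∈ U)
    (hmin : ∀ i, IsMinOn (fun x ↦ f x + ε i * D x) U (M i))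
    (hε : Tendsto ε l (𝓝 0)) (hMN : Tendsto M l (𝓝 N)) : N ∈ minimizers f U := by
  have hNU : N ∈ U := hU.mem_of_tendsto hMN (.of_forall hM)
  have hMN' : Tendsto M l (𝓝[U] N) := tendsto_nhdsWithin_iff.2 ⟨hMN, .of_forall hM⟩
  refine ⟨hNU, fun y hy ↦ ?_⟩
  have hbound : ∀ i, f (M i) ≤ f y + ε i * (D y - D (M i)) := fun i ↦ by
    have : f (M i) + ε i * D (M i) ≤ f y + ε i * D y := hmin i hy
    linarith
  have hrhs : Tendsto (fun i ↦ f y + ε i * (D y - D (M i))) l (𝓝 (f y + 0 * (D y - D N))) :=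
    tendsto_const_nhds.add (hε.mul (tendsto_const_nhds.sub ((hD N hNU).tendsto.comp hMN')))
  simpa using le_of_tendsto_of_tendsto' ((hf N hNU).tendsto.comp hMN') hrhs hbound

theorem isMinOn_minimizers_of_tendsto_regularized (hU : IsClosed U) (hD : ContinuousOn D U)
    (hεpos : ∀ i, 0 < ε i) (hM : ∀ i, M i ∈ U)
    (hmin : ∀ i, IsMinOn (fun x ↦ f x + ε i * D x) U (M i))
    (hMN : Tendsto M l (𝓝 N)) : IsMinOn D (minimizers f U) N := by
  have hNU : N ∈ U := hU.mem_of_tendsto hMN (.of_forall hM)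
  have hMN' : Tendsto M l (𝓝[U] N) := tendsto_nhdsWithin_iff.2 ⟨hMN, .of_forall hM⟩
  intro y hy
  have hbound : ∀ i, D (M i) ≤ D y := fun i ↦ by
    have hreg : f (M i) + ε i * D (M i) ≤ f y + ε i * D y := hmin i hy.1
    have hfy : f y ≤ f (M i) := hy.2 (hM i)
    have : ε i * D (M i) ≤ ε i * D y := by linarith
    exact le_of_mul_le_mul_left this (hεpos i)
  exact le_of_tendsto' ((hD N hNU).tendsto.comp hMN') hbound

end Regularization

theorem stmt3_general (n : ℕ) (U : Set (Fin n → ℝ)) (hUne : U.Nonempty)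
    (hUcomp : IsCompact U)
    (f D : (Fin n → ℝ) → ℝ)
    (hfc : ContinuousOn f U) (hfconv : ConvexOn ℝ U f)
    (hDc : ContinuousOn D U) (hDconv : StrictConvexOn ℝ U D)
    (εs : ℕ → ℝ) (hεpos : ∀ p, 0 < εs p)
    (hεlim : Filter.Tendsto εs Filter.atTop (nhds 0))
    (Ms : ℕ → (Fin n → ℝ)) (hMU : ∀ p, Ms p ∈ U)
    (hMmin : ∀ p, ∀ x ∈ U, f (Ms p) + εs p * D (Ms p) ≤ f x + εs p * D x) :
    ∃ Mstar ∈ U,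
      -- (i) M⋆ minimizes f over U and is the unique minimizer of D over argmin f
      (∀ x ∈ U, f Mstar ≤ f x) ∧
      (∀ x ∈ U, (∀ y ∈ U, f x ≤ f y) → D Mstar ≤ D x) ∧
      (∀ x ∈ U, (∀ y ∈ U, f x ≤ f y) →
        (∀ y ∈ U, (∀ z ∈ U, f y ≤ f z) → D x ≤ D y) → x = Mstar) ∧
      -- (ii) every limit point of the sequence equals M⋆
      (∀ N : Fin n → ℝ,
        (∃ φ : ℕ → ℕ, StrictMono φ ∧
          Filter.Tendsto (fun p => Ms (φ p)) Filter.atTop (nhds N)) → N = Mstar) ∧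
      -- (iii) the whole sequence converges to M⋆
      Filter.Tendsto Ms Filter.atTop (nhds Mstar) := by
  have hreg : ∀ p, IsMinOn (fun x ↦ f x + εs p * D x) U (Ms p) := fun p ↦ isMinOn_iff.2 (hMmin p)
  obtain ⟨m, hmU, hm⟩ := hUcomp.exists_isMinOn hUne hfc
  obtain ⟨Mstar, hMstar, hMstarD⟩ := (isCompact_minimizers hUcomp hfc).exists_isMinOn
    ⟨m, hmU, hm⟩ (hDc.mono (minimizers_subset f U))
  have huniq : ∀ x ∈ minimizers f U, IsMinOn D (minimizers f U) x → x = Mstar :=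
    fun x hx hxD ↦ (hDconv.subset (minimizers_subset f U) hfconv.convex_minimizers).eq_of_isMinOn
      hxD hMstarD hx hMstar
  have hlimit : ∀ N, (∃ φ : ℕ → ℕ, StrictMono φ ∧
      Tendsto (fun p ↦ Ms (φ p)) atTop (𝓝 N)) → N = Mstar := by
    rintro N ⟨φ, hφ, hN⟩
    have hεφ := hεlim.comp hφ.tendsto_atTop
    exact huniq N
      (mem_minimizers_of_tendsto_regularized hUcomp.isClosed hfc hDc (hMU <| φ ·) (hreg <| φ ·)
        hεφ hN)
      (isMinOn_minimizers_of_tendsto_regularized hUcomp.isClosed hDc (hεpos <| φ ·)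
        (hMU <| φ ·) (hreg <| φ ·) hN)
  refine ⟨Mstar, hMstar.1, fun x hx ↦ hMstar.2 hx, fun x hx hxf ↦ hMstarD ⟨hx, hxf⟩,
    fun x hx hxf hxD ↦ huniq x ⟨hx, hxf⟩ fun y hy ↦ hxD y hy.1 hy.2, hlimit, ?_⟩
  exact hUcomp.tendsto_nhds_of_unique_mapClusterPt (.of_forall hMU)
    fun N _ hN ↦ hlimit N hN.tendsto_subseq

/-- convergence of entropically regularized minimizers over a
compact convex set to the unique maximum-entropy (minimal-`D`) minimizer of `f`. -/
theorem stmt3 (n : ℕ) (U : Set (Fin n → ℝ)) (hUne : U.Nonempty)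
    (hUcomp : IsCompact U) (hUconv : Convex ℝ U)
    (f D : (Fin n → ℝ) → ℝ)
    (hfc : ContinuousOn f U) (hfconv : ConvexOn ℝ U f)
    (hDc : ContinuousOn D U) (hDconv : StrictConvexOn ℝ U D)
    (εs : ℕ → ℝ) (hεpos : ∀ p, 0 < εs p)
    (hεlim : Filter.Tendsto εs Filter.atTop (nhds 0))
    (Ms : ℕ → (Fin n → ℝ)) (hMU : ∀ p, Ms p ∈ U)
    (hMmin : ∀ p, ∀ x ∈ U, f (Ms p) + εs p * D (Ms p) ≤ f x + εs p * D x) :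
    ∃ Mstar ∈ U,
      -- (i) M⋆ minimizes f over U and is the unique minimizer of D over argmin f
      (∀ x ∈ U, f Mstar ≤ f x) ∧
      (∀ x ∈ U, (∀ y ∈ U, f x ≤ f y) → D Mstar ≤ D x) ∧
      (∀ x ∈ U, (∀ y ∈ U, f x ≤ f y) →
        (∀ y ∈ U, (∀ z ∈ U, f y ≤ f z) → D x ≤ D y) → x = Mstar) ∧
      -- (ii) every limit point of the sequence equals M⋆
      (∀ N : Fin n → ℝ,
        (∃ φ : ℕ → ℕ, StrictMono φ ∧
          Filter.Tendsto (fun p => Ms (φ p)) Filter.atTop (nhds N)) → N = Mstar) ∧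
      -- (iii) the whole sequence converges to M⋆
      Filter.Tendsto Ms Filter.atTop (nhds Mstar) :=
  stmt3_general n U hUne hUcomp f D hfc hfconv hDc hDconv εs hεpos hεlim Ms hMU hMmin
end

section
/- Let F, G be positive integers, C ∈ ℝ^{F×G}, u ∈ ℝ^F, ν^j ∈ ℝ^F with strictly positive entries, and γ, ζ, ε, η > 0. For ν ∈ ℝ^F with nonnegative entries define S_c(ν) = min{ ⟨C, M⟩ + ε·D(M) + η·‖M‖_{∞,1} : M ∈ ℝ^{F×G}, M ≥ 0, M·1_G = ν }, and define the primal objective P(ν) = γ⟨u, ν⟩ + D_KL(ν, ν^j) + γζ·S_c(ν). For λ ∈ ℝ^F and Ψ ∈ ℝ^{F×G} with ‖Ψ‖_{1,∞} ≤ η define the dual objective Φ(λ, Ψ) = γζε·⟨K ⊙ W, v·1_Gᵀ⟩ + ⟨ν^j, exp(−γu − γζλ)⟩, where v = exp(λ/ε), K = exp(−C/ε), W = exp(Ψ/ε), all exponentials taken entrywise and ⊙ denoting entrywise product. Then Φ attains its minimum at some (λ⋆, Ψ⋆) with ‖Ψ⋆‖_{1,∞} ≤ η, the vector ν⋆ =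 ν^j ⊙ exp(−γu − γζλ⋆) is the unique minimizer of P over the nonnegative orthant, and the matrix M⋆ = diag(v⋆)(K ⊙ W⋆), with v⋆ = exp(λ⋆/ε) and W⋆ = exp(Ψ⋆/ε), attains the minimum defining S_c(ν⋆). -/
open scoped BigOperators

/-- Mixed norm `‖Ψ‖_{1,∞} = max_g Σ_f |Ψ_{f,g}|`. -/
noncomputable def mixedOneInf {F G : ℕ} (M : Matrix (Fin F) (Fin G) ℝ) : ℝ :=
  ⨆ g, ∑ f, |M f g|

/-- Kullback–Leibler divergence `D_KL(ν, ν') = Σ_f (ν_f log(ν_f/ν'_f) + ν'_f − ν_f)`. -/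
noncomputable def klDiv' {F : ℕ} (ν ν' : Fin F → ℝ) : ℝ :=
  ∑ f, (ν f * Real.log (ν f / ν' f) + ν' f - ν f)

/-!
Weak duality: for `‖Ψ‖_{1,∞} ≤ η` put `M̂ = diag(exp (λ/ε)) (K ⊙ W)`, so that
`ε log M̂ = λ 1ᵀ - C + Ψ`. The Gibbs inequality `m log m - m log a - m + a ≥ 0` at `a = M̂_{fg}` and
Hölder's inequality `-⟨Ψ, M⟩ ≤ η ‖M‖_{∞,1}` bound the cost of every plan `M` with row sums `ν`
from below by `⟨λ, ν⟩ + ε Σ (1 - M̂)`.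

The dual objective is continuous and coercive on the closed feasible set, so it has a minimizer
`(λ⋆, Ψ⋆)`. Its first-order conditions along segments in the convex feasible set say that the rows
of `M⋆` sum to `ν⋆` (variation in `λ`) and that Hölder's inequality is tight at `M⋆` (variation in
`Ψ`), so `M⋆` attains the bound at `ν⋆`. Finally, as `log ν⋆ = log νʲ - γu - γζλ⋆`, replacing
`S_c` in `P` by the affine minorant `⟨λ⋆, ν⟩ + ε Σ (1 - M⋆)` leaves, up to a constant, the sum of
Gibbs gaps `ν_f log ν_f - ν_f log ν⋆_f - ν_f + ν⋆_f`, which vanishes only at `ν = ν⋆`.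
-/

open Finset Filter Set

lemma sub_lt_mul_log_sub_mul_log {x y : ℝ} (hx : 0 ≤ x) (hy : 0 < y) (hxy : x ≠ y) :
    x - y < x * Real.log x - x * Real.log y := by
  rcases hx.eq_or_lt with rfl | hx
  · simpa using hy
  · have h := Real.log_lt_sub_one_of_pos (div_pos hy hx)
      (by rwa [ne_eq, div_eq_one_iff_eq hx.ne', eq_comm])
    have key := mul_lt_mul_of_pos_left h hx
    rw [Real.log_div hy.ne' hx.ne', mul_sub, mul_sub, mul_div_cancel₀ _ hx.ne', mul_one] at key
    linarith

lemma sub_le_mul_log_sub_mul_log {x y : ℝ} (hx : 0 ≤ x) (hy : 0 < y) :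
    x - y ≤ x * Real.log x - x * Real.log y := by
  rcases eq_or_ne x y with rfl | hxy
  · simp
  · exact (sub_lt_mul_log_sub_mul_log hx hy hxy).le

lemma le_log_div_of_mul_exp_le {a b t : ℝ} (ha : 0 < a) (h : a * Real.exp t ≤ b) :
    t ≤ Real.log (b / a) := by
  have hb : 0 < b := (mul_pos ha (Real.exp_pos t)).trans_le h
  rw [Real.le_log_iff_exp_le (div_pos hb ha), le_div_iff₀ ha, mul_comm]
  exact h

section

variable {F G : ℕ}

def dualFeasibleSet (η : ℝ) : Set (Matrix (Fin F) (Fin G) ℝ) :=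
  {Ψ | ∀ g, ∑ f, |Ψ f g| ≤ η}

lemma isClosed_dualFeasibleSet (η : ℝ) :
    IsClosed (dualFeasibleSet η : Set (Matrix (Fin F) (Fin G) ℝ)) := by
  rw [dualFeasibleSet, ofPred_forall]
  exact isClosed_iInter fun g => isClosed_le (by fun_prop) continuous_const

lemma convex_dualFeasibleSet (η : ℝ) :
    Convex ℝ (dualFeasibleSet η : Set (Matrix (Fin F) (Fin G) ℝ)) := by
  intro Ψ hΨ Ψ' hΨ' a b ha hb hab g
  calc ∑ f, |(a • Ψ + b • Ψ') f g| ≤ ∑ f, (a * |Ψ f g| + b * |Ψ' f g|) := by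
        gcongr with f
        simpa [abs_mul, abs_of_nonneg ha, abs_of_nonneg hb] using
          abs_add_le (a * Ψ f g) (b * Ψ' f g)
    _ = a * ∑ f, |Ψ f g| + b * ∑ f, |Ψ' f g| := by
        rw [sum_add_distrib, mul_sum, mul_sum]
    _ ≤ a * η + b * η := by gcongr; exacts [hΨ g, hΨ' g]
    _ = η := by rw [← add_mul, hab, one_mul]

lemma mixedOneInf_le_iff [Nonempty (Fin G)] {Ψ : Matrix (Fin F) (Fin G) ℝ} {η : ℝ} :
    mixedOneInf Ψ ≤ η ↔ Ψ ∈ dualFeasibleSet η :=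
  ciSup_le_iff (Finite.bddAbove_range _)

lemma neg_frob_le_mul_mixedInfOne {η : ℝ} {Ψ : Matrix (Fin F) (Fin G) ℝ}
    (hΨ : Ψ ∈ dualFeasibleSet η) (M : Matrix (Fin F) (Fin G) ℝ) :
    -frob Ψ M ≤ η * mixedInfOne M := by
  rw [frob, sum_comm, ← sum_neg_distrib, mixedInfOne, mul_sum]
  refine sum_le_sum fun g _ => ?_
  have hcol : ∀ f, |M f g| ≤ ⨆ f', |M f' g| := le_ciSup (Finite.bddAbove_range _)
  calc -∑ f, Ψ f g * M f g ≤ ∑ f, |Ψ f g| * ⨆ f', |M f' g| := by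
        rw [← sum_neg_distrib]
        gcongr with f
        calc -(Ψ f g * M f g) ≤ |Ψ f g| * |M f g| := (neg_le_abs _).trans (abs_mul _ _).le
          _ ≤ |Ψ f g| * ⨆ f', |M f' g| := by gcongr; exact hcol f
    _ = (∑ f, |Ψ f g|) * ⨆ f', |M f' g| := (sum_mul _ _ _).symm
    _ ≤ η * ⨆ f', |M f' g| :=
        mul_le_mul_of_nonneg_right (hΨ g) (Real.iSup_nonneg fun _ => abs_nonneg _)

lemma exists_mem_dualFeasibleSet_frob_eq [Nonempty (Fin F)] {η : ℝ} (hη : 0 ≤ η)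
    {M : Matrix (Fin F) (Fin G) ℝ} (hM : ∀ f g, 0 ≤ M f g) :
    ∃ Ψ ∈ dualFeasibleSet η, frob Ψ M = -(η * mixedInfOne M) := by
  choose fmax hfmax using fun g => Finite.exists_max fun f => M f g
  have hsup : ∀ g, ⨆ f, |M f g| = M (fmax g) g := fun g =>
    le_antisymm (ciSup_le fun f => (abs_of_nonneg (hM f g)).trans_le (hfmax g f))
      ((le_abs_self _).trans (le_ciSup (f := fun f => |M f g|) (Finite.bddAbove_range _) (fmax g)))
  refine ⟨fun f g => if f = fmax g then -η else 0, fun g => ?_, ?_⟩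
  · simp [apply_ite (fun x : ℝ => |x|), abs_of_nonneg hη]
  · simp [frob, mixedInfOne, hsup, sum_comm (γ := Fin F), mul_sum]

noncomputable def dualPlan (ε : ℝ) (C : Matrix (Fin F) (Fin G) ℝ) (lam : Fin F → ℝ)
    (Ψ : Matrix (Fin F) (Fin G) ℝ) : Matrix (Fin F) (Fin G) ℝ :=
  fun f g => Real.exp (lam f / ε) * (Real.exp (-(C f g) / ε) * Real.exp (Ψ f g / ε))

noncomputable def dualMarginal (γ ζ : ℝ) (u νj lam : Fin F → ℝ) : Fin F → ℝ :=
  fun f => νj f * Real.exp (-(γ * u f) - γ * ζ * lam f)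

noncomputable def dualObjective (γ ζ ε : ℝ) (C : Matrix (Fin F) (Fin G) ℝ)
    (u νj : Fin F → ℝ) (lam : Fin F → ℝ) (Ψ : Matrix (Fin F) (Fin G) ℝ) : ℝ :=
  γ * ζ * ε * ∑ f, ∑ g, dualPlan ε C lam Ψ f g + ∑ f, dualMarginal γ ζ u νj lam f

section Dual

variable {γ ζ ε η : ℝ} {C : Matrix (Fin F) (Fin G) ℝ} {u νj : Fin F → ℝ}

lemma dualPlan_pos (lam : Fin F → ℝ) (Ψ : Matrix (Fin F) (Fin G) ℝ) (f : Fin F) (g : Fin G) :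
    0 < dualPlan ε C lam Ψ f g := by
  unfold dualPlan; positivity

lemma dualMarginal_pos (hνj : ∀ f, 0 < νj f) (lam : Fin F → ℝ) (f : Fin F) :
    0 < dualMarginal γ ζ u νj lam f :=
  mul_pos (hνj f) (Real.exp_pos _)

lemma mul_dualPlan_le_dualObjective (hγζε : 0 ≤ γ * ζ * ε) (hνj : ∀ f, 0 < νj f)
    (lam : Fin F → ℝ) (Ψ : Matrix (Fin F) (Fin G) ℝ) (f : Fin F) (g : Fin G) :
    γ * ζ * ε * dualPlan ε C lam Ψ f g ≤ dualObjective γ ζ ε C u νj lam Ψ := by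
  have hplan : dualPlan ε C lam Ψ f g ≤ ∑ f, ∑ g, dualPlan ε C lam Ψ f g :=
    (single_le_sum (fun g _ => (dualPlan_pos lam Ψ f g).le) (mem_univ g)).trans
      (single_le_sum (f := fun f => ∑ g, dualPlan ε C lam Ψ f g)
        (fun f _ => sum_nonneg fun g _ => (dualPlan_pos lam Ψ f g).le) (mem_univ f))
  have hmarg : 0 ≤ ∑ f, dualMarginal γ ζ u νj lam f :=
    sum_nonneg fun f _ => (dualMarginal_pos hνj lam f).le
  unfold dualObjective
  nlinarith [mul_le_mul_of_nonneg_left hplan hγζε]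

lemma dualMarginal_le_dualObjective (hγζε : 0 ≤ γ * ζ * ε) (hνj : ∀ f, 0 < νj f)
    (lam : Fin F → ℝ) (Ψ : Matrix (Fin F) (Fin G) ℝ) (f : Fin F) :
    dualMarginal γ ζ u νj lam f ≤ dualObjective γ ζ ε C u νj lam Ψ := by
  have hplan : 0 ≤ γ * ζ * ε * ∑ f, ∑ g, dualPlan ε C lam Ψ f g :=
    mul_nonneg hγζε (sum_nonneg fun f _ => sum_nonneg fun g _ => (dualPlan_pos lam Ψ f g).le)
  have hmarg : dualMarginal γ ζ u νj lam f ≤ ∑ f, dualMarginal γ ζ u νj lam f :=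
    single_le_sum (fun f _ => (dualMarginal_pos hνj lam f).le) (mem_univ f)
  unfold dualObjective
  linarith

lemma continuous_uncurry_dualObjective :
    Continuous (Function.uncurry (dualObjective γ ζ ε C u νj)) := by
  unfold Function.uncurry dualObjective dualPlan dualMarginal
  fun_prop

lemma exists_isCompact_dualObjective_sublevel [Nonempty (Fin G)] (hγ : 0 < γ) (hζ : 0 < ζ)
    (hε : 0 < ε) (hνj : ∀ f, 0 < νj f) (c : ℝ) :
    ∃ K : Set ((Fin F → ℝ) × Matrix (Fin F) (Fin G) ℝ), IsCompact K ∧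
      ∀ p : (Fin F → ℝ) × Matrix (Fin F) (Fin G) ℝ, p.2 ∈ dualFeasibleSet η →
        dualObjective γ ζ ε C u νj p.1 p.2 ≤ c → p ∈ K := by
  obtain g₀ : Fin G := Classical.arbitrary _
  refine ⟨(univ.pi fun f => Icc (-(Real.log (c / νj f) + γ * u f) / (γ * ζ))
      (Real.log (c / (γ * ζ * ε * (Real.exp (-(C f g₀) / ε) * Real.exp (-η / ε)))) * ε)) ×ˢ
      univ.pi fun _ => univ.pi fun _ => Icc (-η) η,
    (isCompact_univ_pi fun _ => isCompact_Icc).prod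
      (isCompact_univ_pi fun _ => isCompact_univ_pi fun _ => isCompact_Icc), ?_⟩
  rintro ⟨lam, Ψ⟩ hΨ hc
  have hentry : ∀ f g, |Ψ f g| ≤ η := fun f g =>
    (single_le_sum (f := fun f => |Ψ f g|) (fun _ _ => abs_nonneg _) (mem_univ f)).trans (hΨ g)
  refine ⟨fun f _ => ⟨?_, ?_⟩, fun f _ g _ => abs_le.1 (hentry f g)⟩
  · have h := le_log_div_of_mul_exp_le (hνj f)
      ((dualMarginal_le_dualObjective (by positivity) hνj lam Ψ f).trans hc)
    rw [div_le_iff₀ (by positivity)]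
    linarith
  · have hW : Real.exp (-η / ε) ≤ Real.exp (Ψ f g₀ / ε) := by
      gcongr; exact neg_le_of_abs_le (hentry f g₀)
    have h := (mul_dualPlan_le_dualObjective (by positivity) hνj lam Ψ f g₀).trans hc
    rw [← div_le_iff₀ hε]
    refine le_log_div_of_mul_exp_le (by positivity) (le_trans ?_ h)
    unfold dualPlan
    have : 0 ≤ γ * ζ * ε * Real.exp (lam f / ε) * Real.exp (-(C f g₀) / ε) := by positivity
    nlinarith

lemma exists_isMinOn_dualObjective [Nonempty (Fin G)] (hγ : 0 < γ) (hζ : 0 < ζ) (hε : 0 < ε)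
    (hη : 0 ≤ η) (hνj : ∀ f, 0 < νj f) :
    ∃ p ∈ univ ×ˢ dualFeasibleSet η,
      IsMinOn (Function.uncurry (dualObjective γ ζ ε C u νj)) (univ ×ˢ dualFeasibleSet η) p := by
  have h₀ : ((0, 0) : (Fin F → ℝ) × Matrix (Fin F) (Fin G) ℝ) ∈ univ ×ˢ dualFeasibleSet η :=
    ⟨mem_univ _, fun g => by simp [hη]⟩
  obtain ⟨K, hK, hsub⟩ := exists_isCompact_dualObjective_sublevel (C := C) (u := u) (η := η)
    hγ hζ hε hνj (dualObjective γ ζ ε C u νj 0 0)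
  refine continuous_uncurry_dualObjective.continuousOn.exists_isMinOn'
    (isClosed_univ.prod (isClosed_dualFeasibleSet η)) h₀ ?_
  filter_upwards [mem_inf_of_left hK.compl_mem_cocompact,
    mem_inf_of_right (mem_principal_self _)] with p hpK hps
  exact le_of_not_ge fun h => hpK (hsub p hps.2 h)

end Dual

lemma HasDerivAt.nonneg_of_isMinOn_Icc {φ : ℝ → ℝ} {d : ℝ} (hφ : HasDerivAt φ d 0)
    (hmin : IsMinOn φ (Icc 0 1) 0) : 0 ≤ d := by
  have h := hmin.localize.hasFDerivWithinAt_nonneg hφ.hasFDerivAt.hasFDerivWithinAt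
    (y := 1) (mem_posTangentConeAt_of_segment_subset (by simp [segment_eq_Icc]))
  simpa using h

section FirstOrder

variable {γ ζ ε η : ℝ} {C : Matrix (Fin F) (Fin G) ℝ} {u νj : Fin F → ℝ}

lemma dualObjective_add_smul (lam δ : Fin F → ℝ) (Ψ D : Matrix (Fin F) (Fin G) ℝ)
    (t : ℝ) :
    dualObjective γ ζ ε C u νj (lam + t • δ) (Ψ + t • D) =
      γ * ζ * ε * ∑ f, ∑ g, dualPlan ε C lam Ψ f g * Real.exp (t * ((δ f + D f g) / ε)) +
        ∑ f, dualMarginal γ ζ u νj lam f * Real.exp (t * -(γ * ζ * δ f)) := by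
  unfold dualObjective
  congr 1
  · congr 1
    refine sum_congr rfl fun f _ => sum_congr rfl fun g _ => ?_
    simp only [dualPlan, Pi.add_apply, Pi.smul_apply, Matrix.add_apply, Matrix.smul_apply,
      smul_eq_mul, ← Real.exp_add]
    congr 1
    ring
  · refine sum_congr rfl fun f _ => ?_
    simp only [dualMarginal, Pi.add_apply, Pi.smul_apply, smul_eq_mul, mul_assoc,
      ← Real.exp_add]
    congr 2
    ring

lemma hasDerivAt_dualObjective_line (hε : ε ≠ 0) (lam δ : Fin F → ℝ)
    (Ψ D : Matrix (Fin F) (Fin G) ℝ) :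
    HasDerivAt (fun t : ℝ => dualObjective γ ζ ε C u νj (lam + t • δ) (Ψ + t • D))
      (γ * ζ * (∑ f, (∑ g, dualPlan ε C lam Ψ f g - dualMarginal γ ζ u νj lam f) * δ f +
        ∑ f, ∑ g, dualPlan ε C lam Ψ f g * D f g)) 0 := by
  have hexp : ∀ c b : ℝ, HasDerivAt (fun t => c * Real.exp (t * b)) (c * b) 0 := fun c b => by
    simpa using ((hasDerivAt_mul_const (x := (0 : ℝ)) b).exp).const_mul c
  set M := dualPlan ε C lam Ψ
  set ν := dualMarginal γ ζ u νj lam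
  have hplan :
      HasDerivAt (fun t : ℝ => ∑ f, ∑ g, M f g * Real.exp (t * ((δ f + D f g) / ε)))
      (∑ f, ∑ g, M f g * ((δ f + D f g) / ε)) 0 :=
    HasDerivAt.fun_sum fun f _ => HasDerivAt.fun_sum fun g _ => hexp _ _
  have hmarg : HasDerivAt (fun t : ℝ => ∑ f, ν f * Real.exp (t * -(γ * ζ * δ f)))
      (∑ f, ν f * -(γ * ζ * δ f)) 0 :=
    HasDerivAt.fun_sum fun f _ => hexp _ _
  rw [funext (dualObjective_add_smul (C := C) (u := u) (νj := νj) lam δ Ψ D)]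
  refine ((hplan.const_mul (γ * ζ * ε)).add hmarg).congr_deriv ?_
  symm
  rw [← sum_add_distrib, mul_sum, mul_sum, ← sum_add_distrib]
  refine sum_congr rfl fun f _ => ?_
  have hterm : ∀ g, γ * ζ * ε * (M f g * ((δ f + D f g) / ε)) =
      γ * ζ * (M f g * δ f + M f g * D f g) := fun g => by
    field_simp
  rw [mul_sum, sum_congr rfl fun g _ => hterm g, ← mul_sum, sum_add_distrib, ← sum_mul]
  ring

variable {lam : Fin F → ℝ} {Ψ : Matrix (Fin F) (Fin G) ℝ}

lemma dualObjective_first_order (hγ : 0 < γ) (hζ : 0 < ζ) (hε : 0 < ε)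
    (hΨ : Ψ ∈ dualFeasibleSet η)
    (hmin : IsMinOn (Function.uncurry (dualObjective γ ζ ε C u νj))
      (univ ×ˢ dualFeasibleSet η) (lam, Ψ))
    (δ : Fin F → ℝ) {Ψ' : Matrix (Fin F) (Fin G) ℝ} (hΨ' : Ψ' ∈ dualFeasibleSet η) :
    0 ≤ ∑ f, (∑ g, dualPlan ε C lam Ψ f g - dualMarginal γ ζ u νj lam f) * δ f +
      ∑ f, ∑ g, dualPlan ε C lam Ψ f g * (Ψ' f g - Ψ f g) := by
  have hseg : IsMinOn
      (fun t : ℝ => dualObjective γ ζ ε C u νj (lam + t • δ) (Ψ + t • (Ψ' - Ψ))) (Icc 0 1) 0 :=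
    fun t ht => by
      simpa using hmin (a := (_, _))
        ⟨mem_univ _, (convex_dualFeasibleSet η).add_smul_sub_mem hΨ hΨ' ht⟩
  have h := (hasDerivAt_dualObjective_line hε.ne' lam δ Ψ (Ψ' - Ψ)).nonneg_of_isMinOn_Icc hseg
  simpa using nonneg_of_mul_nonneg_right h (mul_pos hγ hζ)

lemma sum_dualPlan_eq_dualMarginal (hγ : 0 < γ) (hζ : 0 < ζ) (hε : 0 < ε)
    (hΨ : Ψ ∈ dualFeasibleSet η)
    (hmin : IsMinOn (Function.uncurry (dualObjective γ ζ ε C u νj))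
      (univ ×ˢ dualFeasibleSet η) (lam, Ψ)) (f : Fin F) :
    ∑ g, dualPlan ε C lam Ψ f g = dualMarginal γ ζ u νj lam f := by
  set r : Fin F → ℝ := fun f => ∑ g, dualPlan ε C lam Ψ f g - dualMarginal γ ζ u νj lam f
  -- the direction `δ = -r` leaves `-∑ f, r f * r f ≥ 0`
  have h := dualObjective_first_order hγ hζ hε hΨ hmin (fun f => -r f) hΨ
  simp only [sub_self, mul_zero, sum_const_zero, add_zero, mul_neg, sum_neg_distrib,
    neg_nonneg] at h
  have hsq := (sum_eq_zero_iff_of_nonneg fun f _ => mul_self_nonneg (r f)).1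
    (le_antisymm h (sum_nonneg fun f _ => mul_self_nonneg (r f))) f (mem_univ f)
  exact sub_eq_zero.1 (mul_self_eq_zero.1 hsq)

lemma frob_dualPlan_le [Nonempty (Fin F)] (hγ : 0 < γ) (hζ : 0 < ζ) (hε : 0 < ε)
    (hη : 0 ≤ η) (hΨ : Ψ ∈ dualFeasibleSet η)
    (hmin : IsMinOn (Function.uncurry (dualObjective γ ζ ε C u νj))
      (univ ×ˢ dualFeasibleSet η) (lam, Ψ)) :
    frob Ψ (dualPlan ε C lam Ψ) ≤ -(η * mixedInfOne (dualPlan ε C lam Ψ)) := by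
  -- complementary slackness: test against the `Ψ'` at which Hölder's inequality is tight
  obtain ⟨Ψ', hΨ', hfrob⟩ :=
    exists_mem_dualFeasibleSet_frob_eq hη fun f g => (dualPlan_pos (C := C) lam Ψ f g).le
  have h := dualObjective_first_order hγ hζ hε hΨ hmin 0 hΨ'
  simp only [Pi.zero_apply, mul_zero, sum_const_zero, zero_add, mul_sub, sum_sub_distrib,
    sub_nonneg] at h
  rw [← hfrob]
  unfold frob
  simpa only [mul_comm] using h

end FirstOrder

noncomputable def transportCost (C : Matrix (Fin F) (Fin G) ℝ) (ε η : ℝ)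
    (M : Matrix (Fin F) (Fin G) ℝ) : ℝ :=
  frob C M + ε * entD M + η * mixedInfOne M

noncomputable def regularizedOT (C : Matrix (Fin F) (Fin G) ℝ) (ε η : ℝ) (ν : Fin F → ℝ) :
    ℝ :=
  sInf {y | ∃ M : Matrix (Fin F) (Fin G) ℝ,
    (∀ f g, 0 ≤ M f g) ∧ (∀ f, ∑ g, M f g = ν f) ∧ y = transportCost C ε η M}

noncomputable def dualBound (ε : ℝ) (C : Matrix (Fin F) (Fin G) ℝ) (lam : Fin F → ℝ)
    (Ψ : Matrix (Fin F) (Fin G) ℝ) (ν : Fin F → ℝ) : ℝ :=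
  ∑ f, lam f * ν f + ε * ∑ f, ∑ g, (1 - dualPlan ε C lam Ψ f g)

section WeakDuality

variable {ε η : ℝ} {C : Matrix (Fin F) (Fin G) ℝ} {lam ν : Fin F → ℝ}
  {Ψ M : Matrix (Fin F) (Fin G) ℝ}

lemma log_dualPlan (f : Fin F) (g : Fin G) :
    Real.log (dualPlan ε C lam Ψ f g) = (lam f - C f g + Ψ f g) / ε := by
  simp only [dualPlan, ← Real.exp_add, Real.log_exp]
  ring

lemma frob_add_entD_sub_eq (hε : ε ≠ 0) (hM : ∀ f, ∑ g, M f g = ν f) :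
    frob C M + ε * entD M - frob Ψ M - ∑ f, lam f * ν f =
      ε * ∑ f, ∑ g, (M f g * Real.log (M f g) - M f g * Real.log (dualPlan ε C lam Ψ f g)
        - M f g + 1) := by
  simp only [frob, entD, log_dualPlan, ← hM, mul_sum, ← sum_sub_distrib, ← sum_add_distrib]
  refine sum_congr rfl fun f _ => sum_congr rfl fun g _ => ?_
  field_simp
  ring

lemma dualBound_le_transportCost (hε : 0 < ε) (hΨ : Ψ ∈ dualFeasibleSet η)
    (hM₀ : ∀ f g, 0 ≤ M f g) (hM : ∀ f, ∑ g, M f g = ν f) :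
    dualBound ε C lam Ψ ν ≤ transportCost C ε η M := by
  have hgibbs : ∑ f, ∑ g, (1 - dualPlan ε C lam Ψ f g) ≤ ∑ f, ∑ g,
      (M f g * Real.log (M f g) - M f g * Real.log (dualPlan ε C lam Ψ f g) - M f g + 1) := by
    gcongr with f _ g _
    linarith [sub_le_mul_log_sub_mul_log (hM₀ f g) (dualPlan_pos (C := C) (ε := ε) lam Ψ f g)]
  have hid := frob_add_entD_sub_eq (C := C) (Ψ := Ψ) (lam := lam) hε.ne' hM
  have hholder := neg_frob_le_mul_mixedInfOne hΨ M
  unfold dualBound transportCost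
  nlinarith [mul_le_mul_of_nonneg_left hgibbs hε.le]

lemma transportCost_dualPlan_eq (hε : 0 < ε) (hΨ : Ψ ∈ dualFeasibleSet η)
    (hrow : ∀ f, ∑ g, dualPlan ε C lam Ψ f g = ν f)
    (hslack : frob Ψ (dualPlan ε C lam Ψ) ≤ -(η * mixedInfOne (dualPlan ε C lam Ψ))) :
    transportCost C ε η (dualPlan ε C lam Ψ) = dualBound ε C lam Ψ ν := by
  refine le_antisymm ?_
    (dualBound_le_transportCost hε hΨ (fun f g => (dualPlan_pos lam Ψ f g).le) hrow)
  have hid := frob_add_entD_sub_eq (C := C) (Ψ := Ψ) (lam := lam) hε.ne' hrow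
  simp only [sub_self, zero_sub, neg_add_eq_sub] at hid
  unfold dualBound transportCost
  linarith

lemma dualBound_le_regularizedOT [Nonempty (Fin G)] (hε : 0 < ε) (hΨ : Ψ ∈ dualFeasibleSet η)
    (hν : ∀ f, 0 ≤ ν f) : dualBound ε C lam Ψ ν ≤ regularizedOT C ε η ν := by
  have hG : (Fintype.card (Fin G) : ℝ) ≠ 0 := Nat.cast_ne_zero.2 Fintype.card_ne_zero
  refine le_csInf ⟨_, fun f _ => ν f / Fintype.card (Fin G),
    fun f g => div_nonneg (hν f) (Nat.cast_nonneg _), fun f => ?_, rfl⟩ ?_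
  · rw [sum_const, card_univ, nsmul_eq_mul, mul_div_cancel₀ _ hG]
  · rintro y ⟨M, hM₀, hM, rfl⟩
    exact dualBound_le_transportCost hε hΨ hM₀ hM

lemma regularizedOT_eq_transportCost (hε : 0 < ε) (hΨ : Ψ ∈ dualFeasibleSet η)
    (hrow : ∀ f, ∑ g, dualPlan ε C lam Ψ f g = ν f)
    (hslack : frob Ψ (dualPlan ε C lam Ψ) ≤ -(η * mixedInfOne (dualPlan ε C lam Ψ))) :
    regularizedOT C ε η ν = transportCost C ε η (dualPlan ε C lam Ψ) := by
  refine IsLeast.csInf_eq ⟨⟨_, fun f g => (dualPlan_pos lam Ψ f g).le, hrow, rfl⟩, ?_⟩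
  rintro y ⟨M, hM₀, hM, rfl⟩
  rw [transportCost_dualPlan_eq hε hΨ hrow hslack]
  exact dualBound_le_transportCost hε hΨ hM₀ hM

end WeakDuality

noncomputable def primalObjective (γ ζ : ℝ) (u νj : Fin F → ℝ) (S : (Fin F → ℝ) → ℝ)
    (ν : Fin F → ℝ) : ℝ :=
  γ * (∑ f, u f * ν f) + klDiv' ν νj + γ * ζ * S ν

section Primal

variable {γ ζ : ℝ} {u νj lam : Fin F → ℝ}

lemma primal_affine_eq_gibbs_sum (hνj : ∀ f, 0 < νj f) (ν : Fin F → ℝ) (K : ℝ) :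
    γ * (∑ f, u f * ν f) + klDiv' ν νj + γ * ζ * (∑ f, lam f * ν f + K) =
      ∑ f, (ν f * Real.log (ν f) - ν f * Real.log (dualMarginal γ ζ u νj lam f) -
        (ν f - dualMarginal γ ζ u νj lam f)) +
      ∑ f, (νj f - dualMarginal γ ζ u νj lam f) + γ * ζ * K := by
  have hterm : ∀ f, γ * (u f * ν f) + (ν f * Real.log (ν f / νj f) + νj f - ν f) +
      γ * ζ * (lam f * ν f) =
      (ν f * Real.log (ν f) - ν f * Real.log (dualMarginal γ ζ u νj lam f) -
        (ν f - dualMarginal γ ζ u νj lam f)) + (νj f - dualMarginal γ ζ u νj lam f) := by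
    intro f
    rw [dualMarginal, Real.log_mul (hνj f).ne' (Real.exp_pos _).ne', Real.log_exp]
    rcases eq_or_ne (ν f) 0 with h | h
    · simp [h]
    · rw [Real.log_div h (hνj f).ne']
      ring
  have hsum := Fintype.sum_congr _ _ hterm
  simp only [sum_add_distrib, sum_sub_distrib, ← mul_sum] at hsum
  unfold klDiv'
  simp only [sum_add_distrib, sum_sub_distrib]
  linarith

lemma primalObjective_lt (hγ : 0 < γ) (hζ : 0 < ζ) (hνj : ∀ f, 0 < νj f)
    {S : (Fin F → ℝ) → ℝ} {K : ℝ}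
    (hS : ∀ ν, (∀ f, 0 ≤ ν f) → ∑ f, lam f * ν f + K ≤ S ν)
    (hSstar : S (dualMarginal γ ζ u νj lam) ≤ ∑ f, lam f * dualMarginal γ ζ u νj lam f + K)
    (ν : Fin F → ℝ) (hν : ∀ f, 0 ≤ ν f) (hne : ν ≠ dualMarginal γ ζ u νj lam) :
    primalObjective γ ζ u νj S (dualMarginal γ ζ u νj lam) <
      primalObjective γ ζ u νj S ν := by
  obtain ⟨f₀, hf₀⟩ := Function.ne_iff.1 hne
  have hν' := primal_affine_eq_gibbs_sum (u := u) (lam := lam) (γ := γ) (ζ := ζ) hνj ν K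
  have hstar := primal_affine_eq_gibbs_sum (u := u) (lam := lam) (γ := γ) (ζ := ζ) hνj
    (dualMarginal γ ζ u νj lam) K
  simp only [sub_self, sum_const_zero, zero_add] at hstar
  have hpos := dualMarginal_pos (γ := γ) (ζ := ζ) (u := u) hνj lam
  set νs := dualMarginal γ ζ u νj lam
  have hgap : 0 < ∑ f, (ν f * Real.log (ν f) - ν f * Real.log (νs f) - (ν f - νs f)) :=
    sum_pos' (fun f _ => sub_nonneg.2 (sub_le_mul_log_sub_mul_log (hν f) (hpos f)))
      ⟨f₀, mem_univ _, sub_pos.2 (sub_lt_mul_log_sub_mul_log (hν f₀) (hpos f₀) hf₀)⟩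
  have hγζ : 0 ≤ γ * ζ := (mul_pos hγ hζ).le
  have h1 := mul_le_mul_of_nonneg_left (hS ν hν) hγζ
  have h2 := mul_le_mul_of_nonneg_left hSstar hγζ
  unfold primalObjective
  linarith

end Primal

end

/-- Proposition 1 of the paper: the Bregman proximal update and the
corresponding optimal transport plan are given in closed form by the solution of
the dual problem. -/
theorem stmt4 (F G : ℕ) (hF : 0 < F) (hG : 0 < G)
    (C : Matrix (Fin F) (Fin G) ℝ) (u : Fin F → ℝ)
    (νj : Fin F → ℝ) (hνj : ∀ f, 0 < νj f)
    (γ ζ ε η : ℝ) (hγ : 0 < γ) (hζ : 0 < ζ) (hε : 0 < ε) (hη : 0 < η)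
    (Sc : (Fin F → ℝ) → ℝ)
    (hSc : ∀ ν : Fin F → ℝ, Sc ν = sInf {y | ∃ M : Matrix (Fin F) (Fin G) ℝ,
        (∀ f g, 0 ≤ M f g) ∧ (∀ f, ∑ g, M f g = ν f) ∧
        y = frob C M + ε * entD M + η * mixedInfOne M})
    (P : (Fin F → ℝ) → ℝ)
    (hP : ∀ ν : Fin F → ℝ, P ν = γ * (∑ f, u f * ν f) + klDiv' ν νj + γ * ζ * Sc ν)
    (Φ : (Fin F → ℝ) → Matrix (Fin F) (Fin G) ℝ → ℝ)
    (hΦ : ∀ (lam : Fin F → ℝ) (Ψ : Matrix (Fin F) (Fin G) ℝ), Φ lam Ψ =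
      γ * ζ * ε * (∑ f, ∑ g,
        Real.exp (-(C f g) / ε) * Real.exp (Ψ f g / ε) * Real.exp (lam f / ε))
      + ∑ f, νj f * Real.exp (-(γ * u f) - γ * ζ * lam f)) :
    ∃ (lams : Fin F → ℝ) (Ψs : Matrix (Fin F) (Fin G) ℝ),
      mixedOneInf Ψs ≤ η ∧
      -- (λ⋆, Ψ⋆) minimizes the dual objective subject to ‖Ψ‖_{1,∞} ≤ η
      (∀ (lam : Fin F → ℝ) (Ψ : Matrix (Fin F) (Fin G) ℝ),
        mixedOneInf Ψ ≤ η → Φ lams Ψs ≤ Φ lam Ψ) ∧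
      ∃ νs : Fin F → ℝ,
        (∀ f, νs f = νj f * Real.exp (-(γ * u f) - γ * ζ * lams f)) ∧
        -- ν⋆ is the unique minimizer of the primal objective over the nonnegative orthant
        (∀ f, 0 ≤ νs f) ∧
        (∀ ν : Fin F → ℝ, (∀ f, 0 ≤ ν f) → P νs ≤ P ν) ∧
        (∀ ν : Fin F → ℝ, (∀ f, 0 ≤ ν f) →
          (∀ ν' : Fin F → ℝ, (∀ f, 0 ≤ ν' f) → P ν ≤ P ν') → ν = νs) ∧
        -- M⋆ = diag(v⋆)(K ⊙ W⋆) attains the minimum defining S_c(ν⋆)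
        ∃ Mst : Matrix (Fin F) (Fin G) ℝ,
          (∀ f g, Mst f g =
            Real.exp (lams f / ε) * (Real.exp (-(C f g) / ε) * Real.exp (Ψs f g / ε))) ∧
          (∀ f g, 0 ≤ Mst f g) ∧ (∀ f, ∑ g, Mst f g = νs f) ∧
          frob C Mst + ε * entD Mst + η * mixedInfOne Mst = Sc νs := by
  have : Nonempty (Fin F) := ⟨⟨0, hF⟩⟩
  have : Nonempty (Fin G) := ⟨⟨0, hG⟩⟩
  obtain rfl : Sc = regularizedOT C ε η := funext hSc
  obtain rfl : P = primalObjective γ ζ u νj (regularizedOT C ε η) := funext hP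
  obtain rfl : Φ = dualObjective γ ζ ε C u νj := by
    funext lam Ψ
    simp only [hΦ, dualObjective, dualPlan, dualMarginal, mul_comm, mul_left_comm]
  obtain ⟨⟨lam, Ψ⟩, ⟨-, hΨ⟩, hmin⟩ :=
    exists_isMinOn_dualObjective (C := C) (u := u) hγ hζ hε hη.le hνj
  have hrow := sum_dualPlan_eq_dualMarginal hγ hζ hε hΨ hmin
  have hslack := frob_dualPlan_le hγ hζ hε hη.le hΨ hmin
  have hSstar := regularizedOT_eq_transportCost hε hΨ hrow hslack
  have hlt := primalObjective_lt (S := regularizedOT C ε η) hγ hζ hνj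
    (fun ν hν => dualBound_le_regularizedOT hε hΨ hν)
    (hSstar.trans (transportCost_dualPlan_eq hε hΨ hrow hslack)).le
  refine ⟨lam, Ψ, mixedOneInf_le_iff.2 hΨ,
    fun lam' Ψ' hΨ' => hmin (a := (lam', Ψ')) ⟨mem_univ _, mixedOneInf_le_iff.1 hΨ'⟩,
    _, fun f => rfl, fun f => (dualMarginal_pos hνj lam f).le, fun ν hν => ?_,
    fun ν hν hνmin => ?_, _, fun f g => rfl, fun f g => (dualPlan_pos lam Ψ f g).le, hrow,
    hSstar.symm⟩
  · rcases eq_or_ne ν (dualMarginal γ ζ u νj lam) with rfl | hne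
    exacts [le_rfl, (hlt ν hν hne).le]
  · by_contra hne
    exact (hlt ν hν hne).not_ge (hνmin _ fun f => (dualMarginal_pos hνj lam f).le)
end

section
/- Let ω ∈ ℝ and ω₀ > 0. Then ĉ(ω, ω₀/2) ≤ ĉ(ω, ω₀). Consequently, for every finite nonnegative Borel measure μ on [−π, π), ∫ ĉ(ω, ω₀/2) dμ(ω) ≤ ∫ ĉ(ω, ω₀) dμ(ω); that is, the unnormalized harmonic transport cost always prefers the sub-octave ω₀/2 over ω₀. -/
open MeasureTheory

/-- Ground cost `ĉ(ω, ω₀) = inf_{k ∈ ℤ, k ≥ 1} (ω − k·ω₀)²`, with the positive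
integers indexed by `k + 1`, `k : ℕ`. -/
noncomputable def chat (ω ω0 : ℝ) : ℝ := ⨅ k : ℕ, (ω - ((k : ℝ) + 1) * ω0) ^ 2

lemma bddBelow_range_harmonic_sq (ω ω0 : ℝ) :
    BddBelow (Set.range fun k : ℕ => (ω - ((k : ℝ) + 1) * ω0) ^ 2) :=
  ⟨0, by rintro x ⟨k, rfl⟩; exact sq_nonneg _⟩

lemma chat_nonneg (ω ω0 : ℝ) : 0 ≤ chat ω ω0 :=
  le_ciInf fun _ => sq_nonneg _

lemma chat_le_sq_sub (ω ω0 : ℝ) : chat ω ω0 ≤ (ω - ω0) ^ 2 := by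
  simpa [chat] using ciInf_le (bddBelow_range_harmonic_sq ω ω0) 0

/-- The harmonic `(k + 1)·ω₀` of `ω₀` is the harmonic `(2k + 2)·(ω₀/2)` of `ω₀/2`. -/
lemma chat_half_le (ω ω0 : ℝ) : chat ω (ω0 / 2) ≤ chat ω ω0 := by
  refine le_ciInf fun k =>
    (ciInf_le (bddBelow_range_harmonic_sq ω (ω0 / 2)) (2 * k + 1)).trans_eq ?_
  push_cast
  ring_nf

lemma measurable_chat (ω0 : ℝ) : Measurable fun ω => chat ω ω0 :=
  Measurable.iInf fun _ => by fun_prop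

lemma integrable_chat_of_isBounded {μ : Measure ℝ} [IsFiniteMeasure μ] {s : Set ℝ}
    (hs : Bornology.IsBounded s) (hμ : μ sᶜ = 0) (ω0 : ℝ) :
    Integrable (fun ω => chat ω ω0) μ := by
  obtain ⟨R, hR⟩ := hs.exists_norm_le
  refine Integrable.of_bound (measurable_chat ω0).aestronglyMeasurable ((R + |ω0|) ^ 2) ?_
  filter_upwards [mem_ae_iff.mpr hμ] with ω hω
  have h_dist : |ω - ω0| ≤ R + |ω0| := (abs_sub _ _).trans (by gcongr; exact hR ω hω)
  calc ‖chat ω ω0‖ = chat ω ω0 := Real.norm_of_nonneg (chat_nonneg ω ω0)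
    _ ≤ |ω - ω0| ^ 2 := (chat_le_sq_sub ω ω0).trans_eq (sq_abs _).symm
    _ ≤ (R + |ω0|) ^ 2 := by gcongr

theorem stmt13_general (ω ω0 : ℝ) :
    chat ω (ω0 / 2) ≤ chat ω ω0 ∧
    ∀ μ : Measure ℝ, IsFiniteMeasure μ →
      μ (Set.Ico (-Real.pi) Real.pi)ᶜ = 0 →
      ∫ ω', chat ω' (ω0 / 2) ∂μ ≤ ∫ ω', chat ω' ω0 ∂μ := by
  refine ⟨chat_half_le ω ω0, fun μ _ hμ => ?_⟩
  exact integral_mono_of_nonneg (.of_forall fun ω' => chat_nonneg ω' (ω0 / 2))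
    (integrable_chat_of_isBounded (Metric.isBounded_Ico _ _) hμ ω0)
    (.of_forall fun ω' => chat_half_le ω' ω0)

/-- the unnormalized harmonic ground cost always prefers the
sub-octave: `ĉ(ω, ω₀/2) ≤ ĉ(ω, ω₀)` pointwise, and hence the corresponding
transport costs satisfy the same inequality for every finite nonnegative Borel
measure supported on `[−π, π)`. -/
theorem stmt13 (ω ω0 : ℝ) (hω0 : 0 < ω0) :
    chat ω (ω0 / 2) ≤ chat ω ω0 ∧
    ∀ μ : Measure ℝ, IsFiniteMeasure μ →
      μ (Set.Ico (-Real.pi) Real.pi)ᶜ = 0 →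
      ∫ ω', chat ω' (ω0 / 2) ∂μ ≤ ∫ ω', chat ω' ω0 ∂μ :=
  stmt13_general ω ω0
end

section
/- Let ω₀ > 0, let k be a positive integer, and let Δ ∈ ℝ with 0 < |Δ| < ω₀/2. Then c(kω₀ + Δ, ω₀) < c(kω₀ + Δ, ω₀/2) if and only if |Δ| < ω₀/3. That is, for the normalized ground cost, an inharmonically perturbed harmonic kω₀ + Δ is assigned more cheaply to fundamental ω₀ than to the sub-octave ω₀/2 exactly when the deviation satisfies |Δ| < ω₀/3. -/
/-- Normalized ground cost `c(ω, ω₀) = ĉ(ω, ω₀)/ω₀²`. -/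
noncomputable def cnorm (ω ω0 : ℝ) : ℝ := chat ω ω0 / ω0 ^ 2

/-! The harmonic `kω₀` lies within `ω₀/2` of `ω = kω₀ + Δ`, so no other positive multiple of `ω₀`
is closer and `c(ω, ω₀) = (Δ/ω₀)²`. For the sub-octave the closest positive multiple of `ω₀/2` is
`2k · ω₀/2` or `(2k ± 1) · ω₀/2`, at distance `min(|Δ|, ω₀/2 − |Δ|)`, so
`c(ω, ω₀/2) = (2 min(|Δ|, ω₀/2 − |Δ|)/ω₀)²`. The comparison thus becomes `|Δ| < 2|Δ|`, true as
`Δ ≠ 0`, together with `|Δ| < ω₀ − 2|Δ|`, i.e. `3|Δ| < ω₀`. -/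

theorem abs_le_abs_add_intCast_mul {K : Type*} [Field K] [LinearOrder K] [IsStrictOrderedRing K]
    {x p : K} (hx : |x| ≤ p / 2) (d : ℤ) : |x| ≤ |x + d * p| := by
  rcases eq_or_ne d 0 with rfl | hd
  · simp
  have hp : 0 ≤ p := by linarith [abs_nonneg x]
  have hdp : p ≤ |d * p| := by
    rw [abs_mul, abs_of_nonneg hp]
    exact le_mul_of_one_le_left hp (by exact_mod_cast Int.one_le_abs hd)
  calc |x| ≤ |d * p| - |x| := by linarith
    _ ≤ |x + d * p| := by simpa [add_comm] using abs_sub_abs_le_abs_add (d * p) x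

theorem chat_natCast_mul_add {ω0 Δ : ℝ} {n : ℕ} (hn : 1 ≤ n) (hΔ : |Δ| ≤ ω0 / 2) :
    chat (n * ω0 + Δ) ω0 = Δ ^ 2 := by
  rw [chat]
  refine le_antisymm ?_ (le_ciInf fun m => ?_)
  · have hbdd : BddBelow (Set.range fun m : ℕ => (n * ω0 + Δ - ((m : ℝ) + 1) * ω0) ^ 2) :=
      ⟨0, by rintro _ ⟨m, rfl⟩; positivity⟩
    simpa [Nat.cast_sub hn] using ciInf_le hbdd (n - 1)
  · have := sq_le_sq.2 (abs_le_abs_add_intCast_mul hΔ ((n : ℤ) - (m + 1)))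
    convert this using 2
    push_cast
    ring

theorem chat_half_natCast_mul_add {ω0 Δ : ℝ} {k : ℕ} (hk : 1 ≤ k) (hΔ : |Δ| ≤ ω0 / 2) :
    chat (k * ω0 + Δ) (ω0 / 2) = min |Δ| (ω0 / 2 - |Δ|) ^ 2 := by
  rcases le_total |Δ| (ω0 / 4) with hq | hq
  · rw [min_eq_left (by linarith), sq_abs,
      show (k : ℝ) * ω0 + Δ = ((2 * k : ℕ) : ℝ) * (ω0 / 2) + Δ by push_cast; ring]
    exact chat_natCast_mul_add (by omega) (by linarith)
  rw [min_eq_right (by linarith)]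
  rcases le_total 0 Δ with hs | hs
  · rw [abs_of_nonneg hs] at hΔ hq ⊢
    rw [show (k : ℝ) * ω0 + Δ = ((2 * k + 1 : ℕ) : ℝ) * (ω0 / 2) + (Δ - ω0 / 2) by
        push_cast; ring,
      chat_natCast_mul_add (by omega) (by rw [abs_le]; constructor <;> linarith)]
    ring
  · rw [abs_of_nonpos hs] at hΔ hq ⊢
    rw [show (k : ℝ) * ω0 + Δ = ((2 * k - 1 : ℕ) : ℝ) * (ω0 / 2) + (Δ + ω0 / 2) by
        push_cast [Nat.cast_sub (by omega : 1 ≤ 2 * k)]; ring,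
      chat_natCast_mul_add (by omega) (by rw [abs_le]; constructor <;> linarith)]
    ring

theorem stmt14_general (ω0 : ℝ) (k : ℕ) (hk : 1 ≤ k) (Δ : ℝ)
    (hΔpos : 0 < |Δ|) (hΔ : |Δ| < ω0 / 2) :
    cnorm ((k : ℝ) * ω0 + Δ) ω0 < cnorm ((k : ℝ) * ω0 + Δ) (ω0 / 2) ↔
      |Δ| < ω0 / 3 := by
  have hω0 : 0 < ω0 := by linarith
  have hmin : 0 ≤ min |Δ| (ω0 / 2 - |Δ|) := le_min (abs_nonneg Δ) (by linarith)
  rw [cnorm, cnorm, chat_natCast_mul_add hk hΔ.le, chat_half_natCast_mul_add hk hΔ.le,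
    ← sq_abs Δ, ← div_pow, ← div_pow,
    pow_lt_pow_iff_left₀ (by positivity) (by positivity) two_ne_zero, div_div_eq_mul_div,
    div_lt_div_iff_of_pos_right hω0, min_mul_of_nonneg _ _ zero_le_two, lt_min_iff]
  constructor
  · rintro ⟨-, h⟩
    linarith
  · intro h
    constructor <;> linarith

/-- for the normalized ground cost, an inharmonically perturbed
harmonic `kω₀ + Δ` (with `0 < |Δ| < ω₀/2`) is assigned more cheaply to the
fundamental `ω₀` than to the sub-octave `ω₀/2` iff `|Δ| < ω₀/3`. -/
theorem stmt14 (ω0 : ℝ) (hω0 : 0 < ω0) (k : ℕ) (hk : 1 ≤ k) (Δ : ℝ)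
    (hΔpos : 0 < |Δ|) (hΔ : |Δ| < ω0 / 2) :
    cnorm ((k : ℝ) * ω0 + Δ) ω0 < cnorm ((k : ℝ) * ω0 + Δ) (ω0 / 2) ↔
      |Δ| < ω0 / 3 :=
  stmt14_general ω0 k hk Δ hΔpos hΔ
end
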